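/- Linearization of powers of Chebyshev polynomials of the second kind: let t ≥ 2 and m ≥ 1 be integers. For each integer k ≥ 0 define c_t(m;k) = (2(k+1)) / (π (m+1)^t) · ∫_0^π sin((m+1)θ)^t · sin((k+1)θ) / sin(θ)^{t−1} dθ. Then, as an identity of real polynomials, ( U_m / (m+1) )^t = Σ_{k=0}^{t·m} c_t(m;k) · U_k / (k+1), and moreover c_t(m;k) = 0 whenever k and t·m have different parities (k ≢ t·m mod 2). -/

import Mathlib

open Polynomial Polynomial.Chebyshev Real intervalIntegral Finset

lemma U_aux (n : ℕ) : (U ℝ (n:ℤ)).natDegree ≤ n ∧ (U ℝ (n:ℤ)).coeff n = 2^n := by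
  induction n using Nat.twoStepInduction with
  | zero => simp [U_zero]
  | one =>
    rw [show ((1:ℕ):ℤ) = 1 by norm_num, U_one]
    constructor
    · compute_degree
    · simp
  | more n ih1 ih2 =>
    obtain ⟨hd1, hc1⟩ := ih1
    obtain ⟨hd2, hc2⟩ := ih2
    have h : U ℝ ((n+2:ℕ):ℤ) = 2 * X * U ℝ ((n+1:ℕ):ℤ) - U ℝ (n:ℤ) := by
      push_cast; exact U_add_two ℝ n
    constructor
    · rw [h]
      have h1 : (2 * X : ℝ[X]).natDegree ≤ 1 := by compute_degree
      have h2 := natDegree_mul_le (p := (2*X : ℝ[X])) (q := U ℝ ((n+1:ℕ):ℤ))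
      refine le_trans (natDegree_sub_le _ _) (max_le ?_ ?_) <;> omega
    · rw [h, Polynomial.coeff_sub,
        coeff_eq_zero_of_natDegree_lt (lt_of_le_of_lt hd1 (by omega)), mul_assoc]
      have h3 : ((2:ℝ[X]) * (X * U ℝ ((n+1:ℕ):ℤ))).coeff (n+2)
          = 2 * (X * U ℝ ((n+1:ℕ):ℤ)).coeff (n+2) := by simp
      rw [h3, Polynomial.coeff_X_mul, hc2]
      ring

lemma exists_expansion : ∀ (N : ℕ) (P : ℝ[X]), P.natDegree ≤ N →
    ∃ c : ℕ → ℝ, P = ∑ k ∈ Finset.range (N+1), c k • U ℝ (k:ℤ) := by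
  intro N
  induction N with
  | zero =>
    intro P hP
    refine ⟨fun _ => P.coeff 0, ?_⟩
    rw [Polynomial.eq_C_of_natDegree_le_zero hP]
    simp [U_zero, Polynomial.smul_eq_C_mul]
  | succ N ih =>
    intro P hP
    set a : ℝ := P.coeff (N+1) / 2^(N+1) with ha
    set Q : ℝ[X] := P - a • U ℝ ((N+1:ℕ):ℤ) with hQ
    have hQdeg : Q.natDegree ≤ N := by
      rw [Polynomial.natDegree_le_iff_coeff_eq_zero]
      intro M hM
      rcases eq_or_lt_of_le (Nat.succ_le_of_lt hM) with hM' | hM'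
      · rw [hQ, Polynomial.coeff_sub, Polynomial.coeff_smul, ← hM']
        rw [(U_aux (N+1)).2, ha]
        rw [smul_eq_mul, div_mul_cancel₀ _ (by positivity), sub_self]
      · have h1 : P.coeff M = 0 := coeff_eq_zero_of_natDegree_lt (lt_of_le_of_lt hP hM')
        have h2 : (U ℝ ((N+1:ℕ):ℤ)).coeff M = 0 :=
          coeff_eq_zero_of_natDegree_lt (lt_of_le_of_lt (U_aux (N+1)).1 hM')
        rw [hQ, Polynomial.coeff_sub, Polynomial.coeff_smul, h1, h2]
        simp
    obtain ⟨c, hc⟩ := ih Q hQdeg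
    refine ⟨fun k => if k = N+1 then a else c k, ?_⟩
    rw [Finset.sum_range_succ]
    simp only [if_pos rfl]
    have : ∑ k ∈ Finset.range (N+1), (if k = N+1 then a else c k) • U ℝ (k:ℤ)
        = ∑ k ∈ Finset.range (N+1), c k • U ℝ (k:ℤ) := by
      refine Finset.sum_congr rfl fun k hk => ?_
      rw [if_neg (by simp at hk; omega)]
    rw [this, ← hc, hQ]
    abel_nf
    simp

lemma integral_cos_int (c : ℤ) (hc : c ≠ 0) :
    ∫ θ in (0:ℝ)..Real.pi, Real.cos ((c:ℝ)*θ) = 0 := by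
  rw [intervalIntegral.integral_comp_mul_left Real.cos (by exact_mod_cast hc)]
  simp [integral_cos, Real.sin_int_mul_pi]

lemma orth (a b : ℕ) :
    ∫ θ in (0:ℝ)..Real.pi, Real.sin (((a:ℝ)+1)*θ) * Real.sin (((b:ℝ)+1)*θ)
      = if a = b then Real.pi/2 else 0 := by
  have key : ∀ θ:ℝ, Real.sin (((a:ℝ)+1)*θ) * Real.sin (((b:ℝ)+1)*θ)
      = (Real.cos (((a:ℝ)-(b:ℝ))*θ) - Real.cos (((a:ℝ)+(b:ℝ)+2)*θ))/2 := by
    intro θ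
    have h := Real.cos_sub_cos (((a:ℝ)-b)*θ) (((a:ℝ)+b+2)*θ)
    rw [show ((((a:ℝ)-b)*θ + ((a:ℝ)+b+2)*θ)/2) = ((a:ℝ)+1)*θ by ring,
      show ((((a:ℝ)-b)*θ - ((a:ℝ)+b+2)*θ)/2) = -(((b:ℝ)+1)*θ) by ring,
      Real.sin_neg] at h
    linarith [h]
  simp only [key]
  have int1 : IntervalIntegrable (fun θ => Real.cos (((a:ℝ)-(b:ℝ))*θ))
      MeasureTheory.volume 0 Real.pi :=
    (Real.continuous_cos.comp (continuous_const.mul continuous_id)).intervalIntegrable _ _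
  have int2 : IntervalIntegrable (fun θ => Real.cos (((a:ℝ)+(b:ℝ)+2)*θ))
      MeasureTheory.volume 0 Real.pi :=
    (Real.continuous_cos.comp (continuous_const.mul continuous_id)).intervalIntegrable _ _
  have e2 : ∫ θ in (0:ℝ)..Real.pi, Real.cos (((a:ℝ)+(b:ℝ)+2)*θ) = 0 := by
    have h := integral_cos_int ((a:ℤ)+(b:ℤ)+2) (by omega)
    push_cast at h; exact h
  rw [intervalIntegral.integral_div, intervalIntegral.integral_sub int1 int2, e2]
  by_cases hab : a = b
  · subst hab
    simp only [sub_self, zero_mul, Real.cos_zero, if_pos rfl]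
    rw [intervalIntegral.integral_const]
    simp
  · have e1 : ∫ θ in (0:ℝ)..Real.pi, Real.cos (((a:ℝ)-(b:ℝ))*θ) = 0 := by
      have h := integral_cos_int ((a:ℤ)-(b:ℤ)) (by omega)
      push_cast at h; exact h
    rw [e1, if_neg hab]
    simp

/-- The Chebyshev linearization coefficient
`c_t(m;k) = (2(k+1))/(π(m+1)^t) ∫_0^π sin((m+1)θ)^t sin((k+1)θ) / sin(θ)^{t−1} dθ`. -/
noncomputable def chebCoeff (t m k : ℕ) : ℝ :=
  (2 * ((k : ℝ) + 1)) / (Real.pi * ((m : ℝ) + 1) ^ t) *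
    ∫ θ in (0 : ℝ)..Real.pi,
      Real.sin (((m : ℝ) + 1) * θ) ^ t * Real.sin (((k : ℝ) + 1) * θ) / Real.sin θ ^ (t - 1)

set_option maxHeartbeats 1000000 in
/-- Linearization of powers of Chebyshev polynomials of the second
kind: for integers `t ≥ 2`, `m ≥ 1`, as an identity of real polynomials,
`(U_m/(m+1))^t = ∑_{k=0}^{tm} c_t(m;k) U_k/(k+1)`, and `c_t(m;k) = 0` whenever `k` and
`t·m` have different parities. -/
theorem chebyshev_power_linearization (t m : ℕ) (ht : 2 ≤ t) (hm : 1 ≤ m) :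
    ((((m : ℝ) + 1)⁻¹ • Polynomial.Chebyshev.U ℝ (m : ℤ)) ^ t =
      ∑ k ∈ Finset.range (t * m + 1),
        chebCoeff t m k • (((k : ℝ) + 1)⁻¹ • Polynomial.Chebyshev.U ℝ (k : ℤ))) ∧
    ∀ k : ℕ, k % 2 ≠ (t * m) % 2 → chebCoeff t m k = 0 := by
  have hπ : Real.pi ≠ 0 := Real.pi_ne_zero
  have hm1 : ((m:ℝ)+1) ≠ 0 := by positivity
  set P : ℝ[X] := (((m:ℝ)+1)⁻¹ • U ℝ (m:ℤ))^t with hPdef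
  have hPdeg : P.natDegree ≤ t * m :=
    le_trans natDegree_pow_le
      (Nat.mul_le_mul_left _ (le_trans (natDegree_smul_le _ _) (U_aux m).1))
  obtain ⟨c, hc⟩ := exists_expansion (t*m) P hPdeg
  have hI : ∀ k ∈ Finset.range (t*m+1),
      (∫ θ in (0:ℝ)..Real.pi,
        P.eval (Real.cos θ) * Real.sin (((k:ℝ)+1)*θ) * Real.sin θ) = c k * (Real.pi/2) := by
    intro k hk
    have point : ∀ θ:ℝ, P.eval (Real.cos θ) * Real.sin (((k:ℝ)+1)*θ) * Real.sin θ
        = ∑ j ∈ Finset.range (t*m+1),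
            c j * (Real.sin (((j:ℝ)+1)*θ) * Real.sin (((k:ℝ)+1)*θ)) := by
      intro θ
      rw [hc, Polynomial.eval_finset_sum, Finset.sum_mul, Finset.sum_mul]
      refine Finset.sum_congr rfl fun j _ => ?_
      have h := Polynomial.Chebyshev.U_real_cos θ (j:ℤ)
      push_cast at h
      simp only [Polynomial.eval_smul, smul_eq_mul]
      linear_combination (c j * Real.sin (((k:ℝ)+1)*θ)) * h
    simp only [point]
    rw [intervalIntegral.integral_finset_sum (fun j _ =>
      (Continuous.intervalIntegrable (by fun_prop) _ _))]
    have step : ∀ j ∈ Finset.range (t*m+1),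
        (∫ θ in (0:ℝ)..Real.pi,
          c j * (Real.sin (((j:ℝ)+1)*θ) * Real.sin (((k:ℝ)+1)*θ)))
        = if j = k then c j * (Real.pi/2) else 0 := by
      intro j _
      rw [intervalIntegral.integral_const_mul, orth]
      by_cases hjk : j = k <;> simp [hjk]
    rw [Finset.sum_congr rfl step, Finset.sum_ite_eq' (Finset.range (t*m+1)) k
      (fun j => c j * (Real.pi/2)), if_pos hk]
  have hJ : ∀ k : ℕ,
      (∫ θ in (0:ℝ)..Real.pi,
        Real.sin (((m:ℝ)+1)*θ)^t * Real.sin (((k:ℝ)+1)*θ) / Real.sin θ ^ (t-1))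
      = ((m:ℝ)+1)^t * ∫ θ in (0:ℝ)..Real.pi,
          P.eval (Real.cos θ) * Real.sin (((k:ℝ)+1)*θ) * Real.sin θ := by
    intro k
    rw [← intervalIntegral.integral_const_mul]
    apply intervalIntegral.integral_congr
    intro θ hθ
    rw [Set.uIcc_of_le Real.pi_nonneg] at hθ
    obtain ⟨h0, h1⟩ := hθ
    simp only [hPdef, Polynomial.eval_pow, Polynomial.eval_smul, smul_eq_mul]
    by_cases hs : Real.sin θ = 0
    · have hθ' : θ = 0 ∨ θ = Real.pi := by
        by_contra hcon
        push_neg at hcon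
        exact absurd hs (ne_of_gt (Real.sin_pos_of_pos_of_lt_pi
          (lt_of_le_of_ne h0 (Ne.symm hcon.1)) (lt_of_le_of_ne h1 hcon.2)))
      have hM0 : Real.sin (((m:ℝ)+1)*θ) = 0 := by
        rcases hθ' with h | h
        · rw [h]; simp
        · rw [h]
          have h2 := Real.sin_int_mul_pi ((m:ℤ)+1)
          push_cast at h2
          exact h2
      rw [hM0, hs]
      simp [zero_pow (show t ≠ 0 by omega)]
    · have hU : (U ℝ (m:ℤ)).eval (Real.cos θ) = Real.sin (((m:ℝ)+1)*θ) / Real.sin θ := by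
        have h := Polynomial.Chebyshev.U_real_cos θ (m:ℤ)
        push_cast at h
        rw [eq_div_iff hs]
        exact h
      rw [hU]
      have hpow : Real.sin θ ^ t = Real.sin θ ^ (t-1) * Real.sin θ := by
        rw [← pow_succ, Nat.sub_add_cancel (by omega)]
      field_simp
      rw [div_pow, mul_pow, hpow]
      field_simp
  constructor
  · have hterm : ∀ k ∈ Finset.range (t*m+1),
        chebCoeff t m k • (((k:ℝ)+1)⁻¹ • U ℝ (k:ℤ)) = c k • U ℝ (k:ℤ) := by
      intro k hk
      rw [smul_smul]
      congr 1
      rw [chebCoeff, hJ k, hI k hk]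
      have hk1 : ((k:ℝ)+1) ≠ 0 := by positivity
      have hMt : ((m:ℝ)+1)^t ≠ 0 := by positivity
      field_simp
    rw [Finset.sum_congr rfl hterm, ← hc]
  · intro k hpar
    have hodd : Odd (m*t + k) := by
      rw [Nat.odd_iff, Nat.mul_comm m t]
      omega
    set f : ℝ → ℝ := fun θ =>
      Real.sin (((m:ℝ)+1)*θ)^t * Real.sin (((k:ℝ)+1)*θ) / Real.sin θ ^ (t-1) with hf
    have hneg : ∀ θ, f (Real.pi - θ) = - f θ := by
      intro θ
      have h1 : Real.sin (((m:ℝ)+1)*(Real.pi - θ)) = (-1:ℝ)^m * Real.sin (((m:ℝ)+1)*θ) := by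
        have h := Real.sin_int_mul_pi_sub (((m:ℝ)+1)*θ) ((m+1 : ℕ) : ℤ)
        rw [zpow_natCast] at h
        push_cast at h
        rw [show ((m:ℝ)+1)*Real.pi - ((m:ℝ)+1)*θ = ((m:ℝ)+1)*(Real.pi-θ) by ring] at h
        rw [h, pow_succ]
        ring
      have h2 : Real.sin (((k:ℝ)+1)*(Real.pi - θ)) = (-1:ℝ)^k * Real.sin (((k:ℝ)+1)*θ) := by
        have h := Real.sin_int_mul_pi_sub (((k:ℝ)+1)*θ) ((k+1 : ℕ) : ℤ)
        rw [zpow_natCast] at h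
        push_cast at h
        rw [show ((k:ℝ)+1)*Real.pi - ((k:ℝ)+1)*θ = ((k:ℝ)+1)*(Real.pi-θ) by ring] at h
        rw [h, pow_succ]
        ring
      simp only [hf]
      rw [h1, h2, Real.sin_pi_sub, mul_pow, ← pow_mul]
      have hsign : ((-1:ℝ))^(m*t) * (-1:ℝ)^k = -1 := by
        rw [← pow_add]
        exact Odd.neg_one_pow hodd
      linear_combination (Real.sin (((m:ℝ)+1)*θ)^t * Real.sin (((k:ℝ)+1)*θ)
        / Real.sin θ ^ (t-1)) * hsign
    have h4 : (∫ θ in (0:ℝ)..Real.pi, f (Real.pi - θ)) = ∫ θ in (0:ℝ)..Real.pi, f θ := by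
      rw [intervalIntegral.integral_comp_sub_left f Real.pi]
      norm_num
    have h5 : (∫ θ in (0:ℝ)..Real.pi, f (Real.pi - θ)) = - ∫ θ in (0:ℝ)..Real.pi, f θ := by
      simp only [hneg]
      exact intervalIntegral.integral_neg
    have hzero : (∫ θ in (0:ℝ)..Real.pi, f θ) = 0 := by linarith
    rw [chebCoeff]
    simp only [hf] at hzero
    rw [hzero, mul_zero]
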